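/- Let A = (Q, A, ·, ∘) be an invertible Mealy automaton with a sink state e (satisfying e·v = e and e∘v = v for all v) such that the sink is accessible from every state. Then for every element g of the group 𝒢(A) (represented by a word over Q ∪ Q^{-1}), there exists a g-regular point: an infinite word w ∈ A^ω with a finite prefix w[n] such that the state transition of the representing word on w[n] lands entirely in the sink (g · w[n] acts trivially). -/

import Mathlib

/-- A Mealy automaton (transducer) with state set `Q` and alphabet `A`. -/
structure Mealy (Q A : Type*) where
  step : Q → A → Q
  out : Q → A → A

namespace Mealy

variable {Q A : Type*}

/-- Action of a state on finite words over the alphabet. -/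
def act (M : Mealy Q A) : Q → List A → List A
  | _, [] => []
  | q, a :: w => M.out q a :: act M (M.step q a) w

/-- Action of the formal inverse of a state on finite words. -/
noncomputable def actInv (M : Mealy Q A) [Nonempty A] : Q → List A → List A
  | _, [] => []
  | q, a :: w =>
    Function.invFun (M.out q) a ::
      actInv M (M.step q (Function.invFun (M.out q) a)) w

/-- Action of a word over `Q ∪ Q⁻¹` (letters `(q, true)` are positive, `(q, false)`
are formal inverses) on finite words over the alphabet. -/
noncomputable def evalW (M : Mealy Q A) [Nonempty A] : List (Q × Bool) → List A → List A
  | [], v => v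
  | (q, true) :: w, v => act M q (evalW M w v)
  | (q, false) :: w, v => actInv M q (evalW M w v)

/-- Invertibility: every output function is a permutation of the alphabet. -/
def IsInvertible (M : Mealy Q A) : Prop := ∀ q, Function.Bijective (M.out q)

/-- Reversibility: every letter acts as a permutation of the states. -/
def IsReversible (M : Mealy Q A) : Prop := ∀ a, Function.Bijective fun q => M.step q a

/-- Bireversibility: invertible, reversible, and the output automaton is reversible. -/
def IsBireversible (M : Mealy Q A) [Nonempty A] : Prop :=
  M.IsInvertible ∧ M.IsReversible ∧
    ∀ b, Function.Bijective fun q => M.step q (Function.invFun (M.out q) b)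

/-- The dual automaton: states and letters are exchanged. -/
def dual (M : Mealy Q A) : Mealy A Q where
  step a q := M.out q a
  out a q := M.step q a

/-- The enriched dual `(∂A)⁻ = ∂(A ⊔ A⁻¹)`: states are letters of `A`,
the alphabet is `Q ∪ Q⁻¹`. -/
noncomputable def edual (M : Mealy Q A) [Nonempty A] : Mealy A (Q × Bool) where
  step a qs :=
    match qs with
    | (q, true) => M.out q a
    | (q, false) => Function.invFun (M.out q) a
  out a qs :=
    match qs with
    | (q, true) => (M.step q a, true)
    | (q, false) => (M.step q (Function.invFun (M.out q) a), false)

/-- The disjoint union `A ⊔ A⁻¹` of an invertible automaton with its inverse: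
states are `Q ∪ Q⁻¹`. -/
noncomputable def withInv (M : Mealy Q A) [Nonempty A] : Mealy (Q × Bool) A where
  step qs a :=
    match qs with
    | (q, true) => (M.step q a, true)
    | (q, false) => (M.step q (Function.invFun (M.out q) a), false)
  out qs a :=
    match qs with
    | (q, true) => M.out q a
    | (q, false) => Function.invFun (M.out q) a

/-- The enrichment `A⁻` of a reversible transducer, over the doubled alphabet
`A ∪ A⁻¹`: to every transition `q →^{a|b} p` the inverse transition
`p →^{a⁻¹|b⁻¹} q` is added. -/
noncomputable def enrich (M : Mealy Q A) [Nonempty Q] : Mealy Q (A × Bool) where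
  step q as :=
    match as with
    | (a, true) => M.step q a
    | (a, false) => Function.invFun (fun p => M.step p a) q
  out q as :=
    match as with
    | (a, true) => (M.out q a, true)
    | (a, false) => (M.out (Function.invFun (fun p => M.step p a) q) a, false)

/-- The state reached from `q` after reading the word `w`. -/
def run (M : Mealy Q A) (q : Q) (w : List A) : Q := w.foldl M.step q

/-- Action of a state on right-infinite words over the alphabet. -/
def actOmega (M : Mealy Q A) (q : Q) (u : ℕ → A) : ℕ → A :=
  fun n => M.out (M.run q (List.ofFn fun i : Fin n => u i)) (u n)

/-- Action of a word of states on right-infinite words. -/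
def applyListOmega (M : Mealy Q A) (l : List Q) (u : ℕ → A) : ℕ → A :=
  l.foldl (fun v q => M.actOmega q v) u

/-- The orbit of a boundary point under the semigroup generated by the states. -/
def orbitOmega (M : Mealy Q A) (u : ℕ → A) : Set (ℕ → A) :=
  {z | ∃ l : List Q, z = M.applyListOmega l u}

/-- Action of a word of states on finite words over the alphabet. -/
def wact (M : Mealy Q A) : List Q → List A → List A
  | [], u => u
  | q :: w, u => act M q (wact M w u)

/-- State-word transition: the coupled action `w · u` of an input word `u` on a
word of states `w`. -/
def wstep (M : Mealy Q A) : List Q → List A → List Q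
  | [], _ => []
  | q :: w, u => M.run q (wact M w u) :: wstep M w u

end Mealy

/-- The length-`n` prefix of a right-infinite word. -/
def pre {α : Type*} (u : ℕ → α) (n : ℕ) : List α := List.ofFn fun i : Fin n => u i

/-- The periodic infinite word `w^ω`. -/
def periodicWord {α : Type*} [Inhabited α] (w : List α) : ℕ → α :=
  fun n => w.getD (n % w.length) default

/-! Let `S` be a set of states closed under transitions on which every state acts trivially.
Words of states lying in `S` stay in `S` and act trivially, and the state-word transition
`l · u` is an action of the monoid of input words. So if `u` sends `l` into `S`, then `u ++ v`
sends `q :: l` into `S` as soon as `v` leads `q · l(u)` into `S`, and induction on the word of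
states yields an input sending it into `S`. In `A ⊔ A⁻¹` take `S = {e, e⁻¹}`: it is accessible
from `q⁻¹` because, by invertibility, `q⁻¹` reading `q(u)` follows the path of `q` reading `u`. -/

namespace Mealy

variable {Q A : Type*}

def IsSinkSet (M : Mealy Q A) (S : Set Q) : Prop :=
  ∀ q ∈ S, ∀ a, M.step q a ∈ S ∧ M.out q a = a

section Append

variable (M : Mealy Q A)

theorem run_cons (q : Q) (a : A) (u : List A) : M.run q (a :: u) = M.run (M.step q a) u := rfl

theorem run_append (q : Q) (u v : List A) : M.run q (u ++ v) = M.run (M.run q u) v :=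
  List.foldl_append

theorem act_append (q : Q) (u v : List A) :
    M.act q (u ++ v) = M.act q u ++ M.act (M.run q u) v := by
  induction u generalizing q with
  | nil => rfl
  | cons a u ih => simp [act, ih, run_cons]

theorem wact_append (l : List Q) (u v : List A) :
    M.wact l (u ++ v) = M.wact l u ++ M.wact (M.wstep l u) v := by
  induction l with
  | nil => rfl
  | cons q l ih => simp [wact, wstep, ih, act_append]

theorem wstep_append (l : List Q) (u v : List A) :
    M.wstep l (u ++ v) = M.wstep (M.wstep l u) v := by
  induction l with
  | nil => rfl
  | cons q l ih => simp [wstep, wact_append, run_append, ih]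

end Append

namespace IsSinkSet

variable {M : Mealy Q A} {S : Set Q}

theorem run_mem (hS : M.IsSinkSet S) {q : Q} (hq : q ∈ S) (u : List A) : M.run q u ∈ S := by
  induction u generalizing q with
  | nil => exact hq
  | cons a u ih => exact ih (hS q hq a).1

theorem act_eq (hS : M.IsSinkSet S) {q : Q} (hq : q ∈ S) (u : List A) : M.act q u = u := by
  induction u generalizing q with
  | nil => rfl
  | cons a u ih => rw [act, (hS q hq a).2, ih (hS q hq a).1]

theorem wact_eq (hS : M.IsSinkSet S) {l : List Q} (hl : ∀ p ∈ l, p ∈ S) (u : List A) :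
    M.wact l u = u := by
  induction l with
  | nil => rfl
  | cons q l ih =>
    rw [List.forall_mem_cons] at hl
    rw [wact, ih hl.2, hS.act_eq hl.1]

theorem wstep_mem (hS : M.IsSinkSet S) {l : List Q} (hl : ∀ p ∈ l, p ∈ S) (u : List A) :
    ∀ p ∈ M.wstep l u, p ∈ S := by
  induction l with
  | nil => simp [wstep]
  | cons q l ih =>
    rw [List.forall_mem_cons] at hl
    simpa [wstep] using ⟨hS.run_mem hl.1 _, ih hl.2⟩

theorem exists_wstep_mem (hS : M.IsSinkSet S) (hacc : ∀ q, ∃ u, M.run q u ∈ S) (l : List Q) :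
    ∃ u : List A, ∀ p ∈ M.wstep l u, p ∈ S := by
  induction l with
  | nil => exact ⟨[], by simp [wstep]⟩
  | cons q l ih =>
    obtain ⟨u, hu⟩ := ih
    obtain ⟨v, hv⟩ := hacc (M.run q (M.wact l u))
    refine ⟨u ++ v, ?_⟩
    rw [wstep_append, wstep, wstep, hS.wact_eq hu, List.forall_mem_cons]
    exact ⟨hv, hS.wstep_mem hu v⟩

end IsSinkSet

section WithInv

variable [Nonempty A] (M : Mealy Q A)

theorem withInv_run_true (q : Q) (u : List A) :
    M.withInv.run (q, true) u = (M.run q u, true) := by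
  induction u generalizing q with
  | nil => rfl
  | cons a u ih => exact ih (M.step q a)

theorem withInv_run_false_act (hinj : ∀ q, (M.out q).Injective) (q : Q) (u : List A) :
    M.withInv.run (q, false) (M.act q u) = (M.run q u, false) := by
  induction u generalizing q with
  | nil => rfl
  | cons a u ih =>
    have hstep : M.withInv.step (q, false) (M.out q a) = (M.step q a, false) := by
      simp only [withInv, Function.leftInverse_invFun (hinj q) a]
    rw [act, run_cons, hstep, ih, run_cons]

theorem exists_run_withInv_fst_eq (hinj : ∀ q, (M.out q).Injective) {e : Q}
    (hacc : ∀ q, ∃ u, M.run q u = e) (s : Q × Bool) : ∃ u, (M.withInv.run s u).1 = e := by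
  obtain ⟨q, _ | _⟩ := s <;> obtain ⟨u, hu⟩ := hacc q
  · exact ⟨M.act q u, by rw [M.withInv_run_false_act hinj, hu]⟩
  · exact ⟨u, by rw [withInv_run_true, hu]⟩

theorem isSinkSet_withInv {e : Q} (hsink : ∀ a, M.step e a = e ∧ M.out e a = a) :
    M.withInv.IsSinkSet {p | p.1 = e} := by
  rintro ⟨q, _ | _⟩ (rfl : q = e) a
  · have hinv_out : Function.invFun (M.out q) a = a := by
      simpa only [(hsink _).2] using Function.invFun_eq (f := M.out q) ⟨a, (hsink a).2⟩
    exact ⟨(hsink _).1, hinv_out⟩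
  · exact hsink a

end WithInv

end Mealy

theorem pre_getD {α : Type*} (l : List α) (d : α) : pre (l.getD · d) l.length = l :=
  List.ext_getElem (by simp [pre]) fun i _ _ => by simp [pre]

theorem exists_regular_point_of_accessible_sink_general {Q A : Type}
    [Nonempty A]
    (M : Mealy Q A) (hinv : M.IsInvertible)
    (e : Q) (hsink : ∀ a : A, M.step e a = e ∧ M.out e a = a)
    (hacc : ∀ q : Q, ∃ u : List A, M.run q u = e)
    (g : List (Q × Bool)) :
    ∃ w : ℕ → A, ∃ n : ℕ,
      ∀ p ∈ M.withInv.wstep g (pre w n), p.1 = e := by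
  obtain ⟨u, hu⟩ := (M.isSinkSet_withInv hsink).exists_wstep_mem
    (M.exists_run_withInv_fst_eq (fun q => (hinv q).injective) hacc) g
  exact ⟨(u.getD · (Classical.arbitrary A)), u.length, by rwa [pre_getD]⟩

/-- If an invertible Mealy automaton has a sink state `e` (with `e·a = e` and
`e∘a = a`) accessible from every state, then every element `g` of `𝒢(A)`,
represented by a word over `Q ∪ Q⁻¹`, admits a `g`-regular point: an infinite word
`w ∈ A^ω` with a finite prefix on which the state-word transition of the
representing word lands entirely in the sink. -/
theorem exists_regular_point_of_accessible_sink {Q A : Type}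
    [Fintype Q] [Fintype A] [Nonempty A]
    (M : Mealy Q A) (hinv : M.IsInvertible)
    (e : Q) (hsink : ∀ a : A, M.step e a = e ∧ M.out e a = a)
    (hacc : ∀ q : Q, ∃ u : List A, M.run q u = e)
    (g : List (Q × Bool)) :
    ∃ w : ℕ → A, ∃ n : ℕ,
      ∀ p ∈ M.withInv.wstep g (pre w n), p.1 = e :=
  exists_regular_point_of_accessible_sink_general M hinv e hsink hacc g
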